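/- Let a, b ∈ ℝ^d with a ≠ b, let c be drawn according to a d-dimensional Gaussian distribution with covariance σ²·I, and let I ⊆ ℝ be an interval of length ε. Define Δ_{a,b}(c) = ‖c−a‖₂² − ‖c−b‖₂². Then P(Δ_{a,b}(c) ∈ I) ≤ ε / (4σ‖a−b‖₂). -/

import Mathlib

/-!
Write `c = m + σ x` with `x` standard Gaussian. Expanding the squares,
`‖c - a‖² - ‖c - b‖² = ⟪2σ (b - a), x⟫ + (‖m - a‖² - ‖m - b‖²)` is an affine function of `x`,
and a linear functional `⟪w, x⟫` of a standard Gaussian is a real Gaussian of variance `‖w‖²`.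
Its density is at most `1 / (√(2π) ‖w‖) ≤ 1 / (4σ‖a - b‖)`, and integrating this bound over the
interval gives the claim.
-/

open MeasureTheory ProbabilityTheory

/-- The `d`-dimensional spherical Gaussian measure with mean `m` and standard deviation `σ`
(covariance `σ² · I`), as a measure on Euclidean space. -/
noncomputable def gaussPi (d : ℕ) (m : EuclideanSpace ℝ (Fin d)) (σ : ℝ) :
    Measure (EuclideanSpace ℝ (Fin d)) :=
  Measure.map (MeasurableEquiv.toLp 2 (Fin d → ℝ))
    (Measure.pi fun i => gaussianReal (m i) ((σ ^ 2).toNNReal))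

open Real
open scoped NNReal ENNReal RealInnerProductSpace

namespace ProbabilityTheory

lemma gaussianPDFReal_le (μ : ℝ) (v : ℝ≥0) (x : ℝ) :
    gaussianPDFReal μ v x ≤ (√(2 * π * v))⁻¹ := by
  rw [gaussianPDFReal]
  refine mul_le_of_le_one_right (by positivity) (Real.exp_le_one_iff.2 ?_)
  exact div_nonpos_of_nonpos_of_nonneg (neg_nonpos.2 (sq_nonneg _)) (by positivity)

lemma gaussianReal_Icc_le (μ : ℝ) {v : ℝ≥0} (hv : v ≠ 0) (l ε : ℝ) :
    gaussianReal μ v (Set.Icc l (l + ε)) ≤ ENNReal.ofReal (ε / √(2 * π * v)) := calc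
  gaussianReal μ v (Set.Icc l (l + ε))
      = ∫⁻ x in Set.Icc l (l + ε), gaussianPDF μ v x := gaussianReal_apply μ hv _
  _ ≤ ∫⁻ _ in Set.Icc l (l + ε), ENNReal.ofReal (√(2 * π * v))⁻¹ :=
      lintegral_mono fun x ↦ ENNReal.ofReal_le_ofReal (gaussianPDFReal_le μ v x)
  _ = ENNReal.ofReal (ε / √(2 * π * v)) := by
      rw [setLIntegral_const, Real.volume_Icc, add_sub_cancel_left,
        ← ENNReal.ofReal_mul (by positivity), inv_mul_eq_div]

lemma map_pi_gaussianReal_eq_map_stdGaussian {ι : Type*} [Fintype ι]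
    (m : EuclideanSpace ℝ ι) (σ : ℝ) :
    (Measure.pi fun i ↦ gaussianReal (m i) ((σ ^ 2).toNNReal)).map (WithLp.toLp 2)
      = (stdGaussian (EuclideanSpace ℝ ι)).map (fun x ↦ m + σ • x) := by
  have hcoord : ∀ i, gaussianReal (m i) ((σ ^ 2).toNNReal)
      = (gaussianReal 0 1).map (fun x ↦ m i + σ * x) := by
    intro i
    rw [show (fun x ↦ m i + σ * x) = (m i + ·) ∘ (σ * ·) from rfl,
      ← Measure.map_map (measurable_const_add _) (measurable_const_mul _),
      gaussianReal_map_const_mul, gaussianReal_map_const_add]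
    congr 1
    · simp
    · ext; simp [sq_nonneg]
  simp_rw [hcoord]
  rw [← Measure.pi_map_pi (fun i ↦ by fun_prop), Measure.map_map (by fun_prop) (by fun_prop),
    ← map_pi_eq_stdGaussian, Measure.map_map (by fun_prop) (by fun_prop)]
  rfl

lemma stdGaussian_map_innerSL {E : Type*} [NormedAddCommGroup E] [InnerProductSpace ℝ E]
    [FiniteDimensional ℝ E] [MeasurableSpace E] [BorelSpace E] (w : E) :
    (stdGaussian E).map (innerSL ℝ w) = gaussianReal 0 (‖w‖₊ ^ 2) := by
  rw [IsGaussian.map_eq_gaussianReal, integral_strongDual_stdGaussian,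
    variance_dual_stdGaussian, innerSL_apply_norm]
  congr
  ext
  simp only [Real.coe_toNNReal _ (sq_nonneg _), NNReal.coe_pow, coe_nnnorm]

end ProbabilityTheory

lemma sq_norm_sub_sub_sq_norm_sub_add_smul {E : Type*} [NormedAddCommGroup E]
    [InnerProductSpace ℝ E] (m a b x : E) (σ : ℝ) :
    ‖m + σ • x - a‖ ^ 2 - ‖m + σ • x - b‖ ^ 2
      = ⟪(2 * σ) • (b - a), x⟫ + (‖m - a‖ ^ 2 - ‖m - b‖ ^ 2) := by
  rw [add_sub_right_comm, add_sub_right_comm, norm_add_sq_real, norm_add_sq_real,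
    real_inner_smul_left, real_inner_smul_right, real_inner_smul_right, inner_sub_left,
    inner_sub_left, inner_sub_left]
  ring

lemma gaussPi_eq_map_stdGaussian (d : ℕ) (m : EuclideanSpace ℝ (Fin d)) (σ : ℝ) :
    gaussPi d m σ = (stdGaussian (EuclideanSpace ℝ (Fin d))).map (fun x ↦ m + σ • x) :=
  map_pi_gaussianReal_eq_map_stdGaussian m σ

lemma gaussPi_map_sq_norm_sub_sub_sq_norm_sub (d : ℕ) (m a b : EuclideanSpace ℝ (Fin d))
    (σ : ℝ) :
    (gaussPi d m σ).map (fun c ↦ ‖c - a‖ ^ 2 - ‖c - b‖ ^ 2)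
      = gaussianReal (‖m - a‖ ^ 2 - ‖m - b‖ ^ 2) (‖(2 * σ) • (b - a)‖₊ ^ 2) := by
  have hcomp : (fun c ↦ ‖c - a‖ ^ 2 - ‖c - b‖ ^ 2) ∘ (fun x ↦ m + σ • x)
      = (· + (‖m - a‖ ^ 2 - ‖m - b‖ ^ 2)) ∘ innerSL ℝ ((2 * σ) • (b - a)) := by
    ext x
    exact sq_norm_sub_sub_sq_norm_sub_add_smul m a b x σ
  rw [gaussPi_eq_map_stdGaussian, Measure.map_map (by fun_prop) (by fun_prop), hcomp,
    ← Measure.map_map (by fun_prop) (by fun_prop), stdGaussian_map_innerSL,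
    gaussianReal_map_add_const, zero_add]

lemma two_le_sqrt_two_mul_pi : 2 ≤ √(2 * π) :=
  Real.le_sqrt_of_sq_le (by nlinarith [Real.pi_gt_three])

theorem stmt8_general (d : ℕ) (σ ε : ℝ) (hσ : 0 < σ) (hε : 0 ≤ ε)
    (m a b : EuclideanSpace ℝ (Fin d)) (hab : a ≠ b) (l : ℝ) :
    gaussPi d m σ {c | ‖c - a‖ ^ 2 - ‖c - b‖ ^ 2 ∈ Set.Icc l (l + ε)}
      ≤ ENNReal.ofReal (ε / (4 * σ * ‖a - b‖)) := by
  set w := (2 * σ) • (b - a)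
  have hw : ‖w‖ = 2 * σ * ‖a - b‖ := by
    rw [norm_smul, Real.norm_of_nonneg (by positivity), norm_sub_rev]
  have hv : ‖w‖₊ ^ 2 ≠ 0 := by
    simpa [w, hσ.ne', sub_eq_zero] using hab.symm
  change gaussPi d m σ ((fun c ↦ ‖c - a‖ ^ 2 - ‖c - b‖ ^ 2) ⁻¹' Set.Icc l (l + ε)) ≤ _
  rw [← Measure.map_apply (by fun_prop) measurableSet_Icc,
    gaussPi_map_sq_norm_sub_sub_sq_norm_sub]
  refine (gaussianReal_Icc_le _ hv l ε).trans (ENNReal.ofReal_le_ofReal ?_)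
  have hab' : 0 < ‖a - b‖ := norm_sub_pos_iff.2 hab
  rw [NNReal.coe_pow, coe_nnnorm, Real.sqrt_mul (by positivity), Real.sqrt_sq (norm_nonneg _), hw]
  refine div_le_div_of_nonneg_left hε (by positivity) ?_
  calc 4 * σ * ‖a - b‖ = 2 * (2 * σ * ‖a - b‖) := by ring
    _ ≤ √(2 * π) * (2 * σ * ‖a - b‖) := by gcongr; exact two_le_sqrt_two_mul_pi

/-- For `a ≠ b` and `c` drawn from a `d`-dimensional spherical Gaussian with standard deviation
`σ` (arbitrary mean `m`), and any interval `I` of length `ε`, the probability that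
`Δ_{a,b}(c) = ‖c-a‖² - ‖c-b‖²` lies in `I` is at most `ε/(4σ‖a-b‖)`. -/
theorem stmt8 (d : ℕ) (hd : 1 ≤ d) (σ ε : ℝ) (hσ : 0 < σ) (hε : 0 ≤ ε)
    (m a b : EuclideanSpace ℝ (Fin d)) (hab : a ≠ b) (l : ℝ) :
    gaussPi d m σ {c | ‖c - a‖ ^ 2 - ‖c - b‖ ^ 2 ∈ Set.Icc l (l + ε)}
      ≤ ENNReal.ofReal (ε / (4 * σ * ‖a - b‖)) :=
  stmt8_general d σ ε hσ hε m a b hab l
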